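/- Let σ : G ⇢ L be a regular support on a finite abelian group G with values in a regular lattice L of rank r, and let σ* : Ĝ ⇢ L* be its dual support. Then for all 0 ≤ s ≤ r one has γ_{σ*}(s) = |G| / γ_σ(r − s), where γ_{σ*}(s) = |Ĝ_{σ*}(S)| for any S ∈ L with ρ_{L*}(S) = s. -/

import Mathlib

open Finset
open scoped Classical Pointwise

/-- A finite graded lattice of rank `r` (with rank function `ρ`) that is *regular*:
the counting numbers `μ_≤`, `μ_≥` and the Möbius numbers `μ_L` depend only on ranks. -/
structure RegularLattice (L : Type*) [Lattice L] [BoundedOrder L] [Fintype L] where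
  /-- the rank of the lattice -/
  r : ℕ
  /-- the rank function -/
  ρ : L → ℕ
  ρ_bot : ρ ⊥ = 0
  ρ_top : ρ ⊤ = r
  ρ_covby : ∀ S T : L, S ⋖ T → ρ T = ρ S + 1
  /-- the Möbius function of the lattice -/
  mu : L → L → ℤ
  mu_self : ∀ S : L, mu S S = 1
  mu_sum : ∀ S T : L, S < T → mu S T = - ∑ U : L, (if S ≤ U ∧ U < T then mu S U else 0)
  /-- `μ_≤ s t` : the number of elements of rank `s` below an element of rank `t` -/
  muLE : ℕ → ℕ → ℕ
  card_le : ∀ (s : ℕ) (T : L), Nat.card {S : L // ρ S = s ∧ S ≤ T} = muLE s (ρ T)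
  /-- `μ_≥ s t` : the number of elements of rank `s` above an element of rank `t` -/
  muGE : ℕ → ℕ → ℕ
  card_ge : ∀ (s : ℕ) (T : L), Nat.card {S : L // ρ S = s ∧ T ≤ S} = muGE s (ρ T)
  /-- `μ_L s t` : the common value of the Möbius function on pairs of ranks `s ≤ t`,
  with the convention `μ_L s t = 0` for `s > t` -/
  muN : ℕ → ℕ → ℤ
  mu_eq : ∀ S T : L, S ≤ T → mu S T = muN (ρ S) (ρ T)
  muN_zero : ∀ s t : ℕ, t < s → muN s t = 0

/-- A regular support `σ : G ⇢ L` on a finite abelian group `G` with values in a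
regular lattice `L`, together with its cardinality invariant `γ`. -/
structure RegularSupport (L : Type*) [Lattice L] [BoundedOrder L] [Fintype L]
    (G : Type*) [AddCommGroup G] [Fintype G] (RL : RegularLattice L) where
  /-- the support function -/
  σ : G → L
  supp_zero : ∀ g : G, σ g = ⊥ ↔ g = 0
  supp_neg : ∀ g : G, σ (-g) = σ g
  supp_add : ∀ g₁ g₂ : G, σ (g₁ + g₂) ≤ σ g₁ ⊔ σ g₂
  supp_sup : ∀ S₁ S₂ : L,
    {g : G | σ g ≤ S₁ ⊔ S₂} = {g : G | σ g ≤ S₁} + {g : G | σ g ≤ S₂}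
  /-- `γ s` : the common cardinality of `G_σ(S)` over elements `S` of rank `s` -/
  γ : ℕ → ℕ
  card_supp : ∀ S : L, Nat.card {g : G // σ g ≤ S} = γ (RL.ρ S)

/-- The dual support `σ* : Ĝ → L`, `σ*(χ) = ⋁ {S ∈ L : χ ∈ G_σ(S)*}`. -/
noncomputable def RegularSupport.dualSupp {L : Type*} [Lattice L] [BoundedOrder L] [Fintype L]
    {G : Type*} [AddCommGroup G] [Fintype G] {RL : RegularLattice L}
    (RS : RegularSupport L G RL) (χ : AddChar G ℂˣ) : L :=
  (Finset.univ.filter (fun S : L => ∀ g : G, RS.σ g ≤ S → χ g = 1)).sup id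

/-!
`G_σ(S)` is a subgroup of `G`, and `S ≤ σ*(χ)` holds exactly when `χ` annihilates it: by axiom
(D) the elements `T` with `χ ∈ G_σ(T)*` are closed under joins, so the join defining `σ*(χ)` is
itself such an element. Hence `Ĝ_{σ*}(S) = G_σ(S)*`, the character group of `G ⧸ G_σ(S)`, which
has order `|G| / γ_σ(ρ(S))`.
-/

namespace AddChar

lemma card_complexUnits (A : Type*) [AddCommGroup A] [Finite A] :
    Nat.card (AddChar A ℂˣ) = Nat.card A := by
  have : NeZero ((Monoid.exponent (Multiplicative A) : ℕ) : ℂ) :=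
    ⟨Nat.cast_ne_zero.mpr Monoid.exponent_ne_zero_of_finite⟩
  obtain ⟨e⟩ := CommGroup.monoidHom_mulEquiv_of_hasEnoughRootsOfUnity (Multiplicative A) ℂ
  rw [Nat.card_congr (toMonoidHomEquiv.trans e.toEquiv)]
  exact Nat.card_congr Multiplicative.toAdd

def annihilatorEquivQuotient {G M : Type*} [AddCommGroup G] [CommMonoid M] (H : AddSubgroup G) :
    {χ : AddChar G M // ∀ g ∈ H, χ g = 1} ≃ AddChar (G ⧸ H) M where
  toFun χ := toAddMonoidHomEquiv.symm <|
    QuotientAddGroup.lift H (toAddMonoidHomEquiv χ.1) fun g hg => by simp [χ.2 g hg]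
  invFun ψ := ⟨ψ.compAddMonoidHom (QuotientAddGroup.mk' H), fun g hg => by
    simp [(QuotientAddGroup.eq_zero_iff g).mpr hg]⟩
  left_inv χ := by
    ext g
    simp
  right_inv ψ := by
    ext x
    induction x using QuotientAddGroup.induction_on with
    | H g => simp

lemma card_annihilator {G : Type*} [AddCommGroup G] [Finite G] (H : AddSubgroup G) :
    Nat.card {χ : AddChar G ℂˣ // ∀ g ∈ H, χ g = 1} = Nat.card (G ⧸ H) :=
  (Nat.card_congr (annihilatorEquivQuotient H)).trans (card_complexUnits _)

end AddChar

namespace RegularSupport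

variable {L : Type*} [Lattice L] [BoundedOrder L] [Fintype L]
  {G : Type*} [AddCommGroup G] [Fintype G] {RL : RegularLattice L}
  (RS : RegularSupport L G RL)

/-- `G_σ(S)`. -/
def suppSubgroup (S : L) : AddSubgroup G where
  carrier := {g | RS.σ g ≤ S}
  zero_mem' := by simp [(RS.supp_zero 0).mpr rfl]
  add_mem' ha hb := (RS.supp_add _ _).trans (sup_le ha hb)
  neg_mem' {g} hg := by simpa [RS.supp_neg g] using hg

lemma map_eq_one_of_le_sup {χ : AddChar G ℂˣ} {S₁ S₂ : L}
    (h₁ : ∀ g, RS.σ g ≤ S₁ → χ g = 1) (h₂ : ∀ g, RS.σ g ≤ S₂ → χ g = 1)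
    {g : G} (hg : RS.σ g ≤ S₁ ⊔ S₂) : χ g = 1 := by
  have hg' : g ∈ {g : G | RS.σ g ≤ S₁} + {g : G | RS.σ g ≤ S₂} := by
    rw [← RS.supp_sup]
    exact hg
  obtain ⟨a, ha, b, hb, rfl⟩ := hg'
  rw [AddChar.map_add_eq_mul, h₁ a ha, h₂ b hb, one_mul]

lemma map_eq_one_of_le_dualSupp (χ : AddChar G ℂˣ) {g : G} (hg : RS.σ g ≤ RS.dualSupp χ) :
    χ g = 1 := by
  refine Finset.sup_induction (p := fun T => ∀ g : G, RS.σ g ≤ T → χ g = 1) ?_ ?_ ?_ g hg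
  · intro g hg
    rw [le_bot_iff, RS.supp_zero] at hg
    simp [hg]
  · exact fun _ h₁ _ h₂ _ => RS.map_eq_one_of_le_sup h₁ h₂
  · intro T hT
    exact (Finset.mem_filter.mp hT).2

lemma le_dualSupp_iff (χ : AddChar G ℂˣ) (S : L) :
    S ≤ RS.dualSupp χ ↔ ∀ g ∈ RS.suppSubgroup S, χ g = 1 :=
  ⟨fun hS _ hg => RS.map_eq_one_of_le_dualSupp χ (le_trans hg hS),
    fun h => Finset.le_sup (f := id) (Finset.mem_filter.mpr ⟨Finset.mem_univ S, h⟩)⟩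

end RegularSupport

/-- For all `0 ≤ s ≤ r` one has `γ_{σ*}(s) = |G| / γ_σ(r − s)`: for every `S ∈ L`
(of dual rank `s = r - ρ(S)`), the cardinality of `Ĝ_{σ*}(S)` equals
`|G| / γ_σ(ρ(S))`. -/
theorem stmt_5 {L : Type*} [Lattice L] [BoundedOrder L] [Fintype L]
    {G : Type*} [AddCommGroup G] [Fintype G] {RL : RegularLattice L}
    (RS : RegularSupport L G RL) (S : L) :
    (Nat.card {χ : AddChar G ℂˣ // S ≤ RS.dualSupp χ} : ℚ)
      = (Fintype.card G : ℚ) / (RS.γ (RL.ρ S) : ℚ) := by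
  set H := RS.suppSubgroup S
  have hdual : Nat.card {χ : AddChar G ℂˣ // S ≤ RS.dualSupp χ} = Nat.card (G ⧸ H) := by
    rw [Nat.card_congr (Equiv.subtypeEquivRight (RS.le_dualSupp_iff · S))]
    exact AddChar.card_annihilator H
  have hγ : Nat.card H = RS.γ (RL.ρ S) := RS.card_supp S
  have hγ_pos : (0 : ℚ) < RS.γ (RL.ρ S) := by exact_mod_cast hγ ▸ Nat.card_pos
  rw [hdual, eq_div_iff hγ_pos.ne', ← hγ, ← Nat.card_eq_fintype_card]
  exact_mod_cast (H.card_eq_card_quotient_mul_card_addSubgroup).symm
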